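/- arXiv:2003.04371 — 2 statements merged into one kernel-verified Lean document; each statement's English description precedes it below -/
import Mathlib

section
/- Let h : ℝⁿ → ℝ with safe set C = {x : h(x) ≥ 0}, fix η ∈ (0,1] and Z ≥ 0. Consider the discrete-time system x_{t+1} = f(x_t) + g(x_t)u_t where at each step the control satisfies the relaxed barrier inequality h(x_{t+1}) ≥ (1−η)h(x_t) − ζ_t with slack 0 ≤ ζ_t ≤ Z. Then the enlarged set C' = {x : h(x) + Z/η ≥ 0} is forward invariant: if x_0 ∈ C', then x_t ∈ C' for all t ≥ 0. -/
/-- Relaxed CBF forward invariance (Theorem 1): with per-step slack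
`0 ≤ ζ_t ≤ Z`, the enlarged set `C' = {x | h x + Z/η ≥ 0}` is forward
invariant for `x_{t+1} = f(x_t) + g(x_t) u_t`. -/
theorem stmt1 {n m : ℕ}
    (h : (Fin n → ℝ) → ℝ)
    (f : (Fin n → ℝ) → (Fin n → ℝ))
    (g : (Fin n → ℝ) → (Fin m → ℝ) → (Fin n → ℝ))
    (η Z : ℝ) (hη0 : 0 < η) (hη1 : η ≤ 1) (hZ : 0 ≤ Z)
    (x : ℕ → (Fin n → ℝ)) (u : ℕ → (Fin m → ℝ)) (ζ : ℕ → ℝ)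
    (hdyn : ∀ t, x (t + 1) = f (x t) + g (x t) (u t))
    (hζ0 : ∀ t, 0 ≤ ζ t) (hζZ : ∀ t, ζ t ≤ Z)
    (hcbf : ∀ t, h (x (t + 1)) ≥ (1 - η) * h (x t) - ζ t)
    (h0 : h (x 0) + Z / η ≥ 0) :
    ∀ t, h (x t) + Z / η ≥ 0 := by
  intro t
  induction t with
  | zero => exact h0
  | succ t ih =>
    have h1 : h (x (t + 1)) ≥ (1 - η) * h (x t) - ζ t := hcbf t
    have h2 : (1 - η) * h (x t) ≥ (1 - η) * (-(Z / η)) := by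
      apply mul_le_mul_of_nonneg_left (by linarith) (by linarith)
    have h3 : (1 - η) * (-(Z / η)) = -(Z / η) + Z := by
      field_simp
      ring
    nlinarith [hζZ t]
end

section
/- Consider the noisy discrete-time system x_{t+1} = f(x_t) + g(x_t)u_t + w_t with noise w_t ∈ ℝⁿ, and assume p ∈ ℝⁿ has nonnegative entries and each noise coordinate satisfies |w_t(i)| ≤ W, so that pᵀw_t ≥ −pᵀW·1. If at each step the control satisfies pᵀf(x_t) + pᵀg(x_t)u_t + q − pᵀW·1 ≥ (1−η)h(x_t) − ζ_t with 0 ≤ ζ_t ≤ Z and η ∈ (0,1], then the set C' = {x : pᵀx + q + Z/η ≥ 0} is forward invariant whenever x_0 ∈ C'. -/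
/-- Robust relaxed CBF forward invariance (Theorem 2): for the noisy system
`x_{t+1} = f(x_t) + g(x_t) u_t + w_t` with `p ≥ 0` componentwise and
`|w_t(i)| ≤ W`, the robust relaxed CBF constraint renders
`C' = {x | pᵀx + q + Z/η ≥ 0}` forward invariant. -/
theorem stmt4 {n m : ℕ}
    (f : (Fin n → ℝ) → (Fin n → ℝ))
    (g : (Fin n → ℝ) → (Fin m → ℝ) → (Fin n → ℝ))
    (p : Fin n → ℝ) (q η Z W : ℝ)
    (hp : ∀ i, 0 ≤ p i)
    (hη0 : 0 < η) (hη1 : η ≤ 1) (hZ : 0 ≤ Z) (hW : 0 ≤ W)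
    (x : ℕ → (Fin n → ℝ)) (u : ℕ → (Fin m → ℝ))
    (w : ℕ → (Fin n → ℝ)) (ζ : ℕ → ℝ)
    (hdyn : ∀ t, x (t + 1) = f (x t) + g (x t) (u t) + w t)
    (hw : ∀ t i, |w t i| ≤ W)
    (hζ0 : ∀ t, 0 ≤ ζ t) (hζZ : ∀ t, ζ t ≤ Z)
    (hcbf : ∀ t, (∑ i, p i * f (x t) i) + (∑ i, p i * g (x t) (u t) i) + q
      - (∑ i, p i) * W ≥ (1 - η) * ((∑ i, p i * x t i) + q) - ζ t)
    (h0 : (∑ i, p i * x 0 i) + q + Z / η ≥ 0) :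
    ∀ t, (∑ i, p i * x t i) + q + Z / η ≥ 0 := by
  intro t
  induction t with
  | zero => exact h0
  | succ t ih =>
    have hsum : (∑ i, p i * x (t+1) i)
        = (∑ i, p i * f (x t) i) + (∑ i, p i * g (x t) (u t) i)
          + (∑ i, p i * w t i) := by
      rw [hdyn t]
      simp [Pi.add_apply, mul_add, Finset.sum_add_distrib]
    have hwsum : (∑ i, p i * w t i) ≥ -((∑ i, p i) * W) := by
      rw [Finset.sum_mul, ← Finset.sum_neg_distrib]
      apply Finset.sum_le_sum
      intro i _
      have := (abs_le.mp (hw t i)).1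
      nlinarith [hp i]
    have hc := hcbf t
    have hih : (∑ i, p i * x t i) + q ≥ -(Z/η) := by linarith
    have h1 : (1 - η) * ((∑ i, p i * x t i) + q) ≥ (1 - η) * (-(Z/η)) := by
      apply mul_le_mul_of_nonneg_left hih (by linarith)
    have h2 : (1 - η) * (-(Z/η)) = -(Z/η) + Z := by
      field_simp
      ring
    have hz := hζZ t
    have : (∑ i, p i * x (t+1) i) + q ≥ -(Z/η) := by
      rw [hsum]; nlinarith
    linarith
end
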